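/- (When the malicious agent measures 0, the receiver holds a Pauli-corrected copy of the message.) Let |Φ⟩₁ ∈ EuclideanSpace ℂ (Fin 4 → ZMod 2) be the state obtained by applying CNOT (control s₁, target s₂) and then Hadamard on s₁ to φ ⊗ W₃, where φ = α|0⟩ + β|1⟩ (α, β ∈ ℂ) and the qubits are ordered (s₁, s₂, r, m). For each (m₀, m₁) ∈ {0,1}², the component of |Φ⟩₁ supported on bitstrings with s₁-bit m₀, s₂-bit m₁ and m-bit 0 equals (1/√6) |m₀ m₁⟩_{s₁s₂} ⊗ (σ_{m₀m₁} φ)_r ⊗ |0⟩_m, where σ_{00} = X, σ_{01} = I, σ_{10} = XZ, σ_{11} = Z are single-qubit Pauli products. -/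

import Mathlib

/-- Amplitude of the 3-qubit W state at bitstring `(a, b, c)`. -/
noncomputable def w3amp (a b c : ZMod 2) : ℂ :=
  if (a = 1 ∧ b = 0 ∧ c = 0) ∨ (a = 0 ∧ b = 1 ∧ c = 0) ∨ (a = 0 ∧ b = 0 ∧ c = 1)
  then ((1 / Real.sqrt 3 : ℝ) : ℂ) else 0

/-- The joint state `φ ⊗ W₃` with `φ = α|0⟩ + β|1⟩` on qubit `s₁ = 0` and the
3-qubit W state on qubits `(s₂, r, m) = (1, 2, 3)`. -/
noncomputable def jointState (α β : ℂ) : EuclideanSpace ℂ (Fin 4 → ZMod 2) :=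
  WithLp.toLp 2 (fun x => (if x 0 = 0 then α else β) * w3amp (x 1) (x 2) (x 3))

/-- CNOT with control qubit `0` and target qubit `1` (a self-inverse basis permutation). -/
noncomputable def cnot01 (ψ : EuclideanSpace ℂ (Fin 4 → ZMod 2)) :
    EuclideanSpace ℂ (Fin 4 → ZMod 2) :=
  WithLp.toLp 2 (fun x => ψ (Function.update x 1 (x 1 + x 0)))

/-- Hadamard gate on qubit `0`. -/
noncomputable def had0 (ψ : EuclideanSpace ℂ (Fin 4 → ZMod 2)) :
    EuclideanSpace ℂ (Fin 4 → ZMod 2) :=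
  WithLp.toLp 2 (fun x => ((1 / Real.sqrt 2 : ℝ) : ℂ) *
    (ψ (Function.update x 0 0) + (if x 0 = 0 then 1 else -1) * ψ (Function.update x 0 1)))

/-- The state `|Φ⟩₁` obtained by applying CNOT (control `s₁`, target `s₂`) and then
Hadamard on `s₁` to `(α|0⟩ + β|1⟩) ⊗ W₃`. -/
noncomputable def Phi1 (α β : ℂ) : EuclideanSpace ℂ (Fin 4 → ZMod 2) :=
  had0 (cnot01 (jointState α β))

/-- Computational-basis vector `|b₀b₁b₂b₃⟩`. -/
noncomputable def ket4 (b0 b1 b2 b3 : ZMod 2) : EuclideanSpace ℂ (Fin 4 → ZMod 2) :=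
  EuclideanSpace.single ![b0, b1, b2, b3] 1

/-- Single-qubit Pauli X on an amplitude function. -/
noncomputable def pX (f : ZMod 2 → ℂ) : ZMod 2 → ℂ := fun b => f (b + 1)

/-- Single-qubit Pauli Z on an amplitude function. -/
noncomputable def pZ (f : ZMod 2 → ℂ) : ZMod 2 → ℂ := fun b => if b = 0 then f b else -f b

/-- The Pauli correction `σ_{m₀m₁}`: `σ₀₀ = X`, `σ₀₁ = I`, `σ₁₀ = XZ`, `σ₁₁ = Z`. -/
noncomputable def pauliCorr (m0 m1 : ZMod 2) : (ZMod 2 → ℂ) → (ZMod 2 → ℂ) :=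
  if m0 = 0 then (if m1 = 0 then pX else id)
  else (if m1 = 0 then pX ∘ pZ else pZ)

/- On the slice `m = 0` the W state is `(|01⟩ + |10⟩)/√3` on `(s₂, r)`, so after the CNOT the
`α`-branch sits at `r = s₂ + 1` and the `β`-branch at `r = s₂`, and the Hadamard gives the
`β`-branch the sign `(-1)^{s₁}`. Each Pauli correction `σ_{m₀m₁}` does the same reshuffling:
it puts `φ 0` at `r = m₁ + 1` and `(-1)^{m₀} φ 1` at `r = m₁` (`pauliCorr_apply`). -/

lemma pauliCorr_apply (m0 m1 : ZMod 2) (f : ZMod 2 → ℂ) (b : ZMod 2) :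
    pauliCorr m0 m1 f b = if b = m1 + 1 then f 0 else (if m0 = 0 then 1 else -1) * f 1 := by
  unfold pauliCorr pX pZ
  fin_cases m0 <;> fin_cases m1 <;> fin_cases b <;> simp <;> rfl

lemma w3amp_zero_right (a b : ZMod 2) :
    w3amp a b 0 = if b = a + 1 then ((1 / Real.sqrt 3 : ℝ) : ℂ) else 0 := by
  fin_cases a <;> fin_cases b <;> simp [w3amp] <;> rfl

lemma Phi1_apply (α β : ℂ) (x : Fin 4 → ZMod 2) :
    Phi1 α β x = ((1 / Real.sqrt 2 : ℝ) : ℂ) * (α * w3amp (x 1) (x 2) (x 3) +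
      (if x 0 = 0 then 1 else -1) * (β * w3amp (x 1 + 1) (x 2) (x 3))) := by
  simp [Phi1, had0, cnot01, jointState]

lemma Phi1_apply_of_eq_zero (α β : ℂ) {x : Fin 4 → ZMod 2} (h3 : x 3 = 0) :
    Phi1 α β x = ((1 / Real.sqrt 6 : ℝ) : ℂ) *
      if x 2 = x 1 + 1 then α else (if x 0 = 0 then 1 else -1) * β := by
  have h6 : Real.sqrt 6 = Real.sqrt 2 * Real.sqrt 3 := by
    rw [← Real.sqrt_mul (by norm_num)]; norm_num
  rw [Phi1_apply, h3, w3amp_zero_right, w3amp_zero_right, h6]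
  obtain h | h : x 2 = x 1 + 1 ∨ x 2 = x 1 + 1 + 1 := by
    generalize x 1 = a; generalize x 2 = b; revert a b; decide
  · simp [h]
    ring
  · simp [h]
    split_ifs <;> ring

theorem stmt12 (α β : ℂ) (m0 m1 : ZMod 2) :
    (WithLp.toLp 2 (fun x : Fin 4 → ZMod 2 =>
        if x 0 = m0 ∧ x 1 = m1 ∧ x 3 = 0 then Phi1 α β x else 0) :
      EuclideanSpace ℂ (Fin 4 → ZMod 2)) =
    (WithLp.toLp 2 (fun x : Fin 4 → ZMod 2 =>
        if x 0 = m0 ∧ x 1 = m1 ∧ x 3 = 0 then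
          ((1 / Real.sqrt 6 : ℝ) : ℂ) *
            pauliCorr m0 m1 (fun b => if b = 0 then α else β) (x 2)
        else 0) :
      EuclideanSpace ℂ (Fin 4 → ZMod 2)) := by
  congr 1
  funext x
  split_ifs with h
  · obtain ⟨rfl, rfl, h3⟩ := h
    rw [Phi1_apply_of_eq_zero α β h3, pauliCorr_apply]
    simp
  · rfl
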